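/- For every α > 1 and every x ∈ ℝ with |x| ≥ 1, one has ∫_ℝ (1+|x|^α) / ((1+|y+x/2|^α)(1+|y−x/2|^α)) dy ≤ 2^{α+2} ∫_0^∞ dz/(1+z^α), and the right-hand side is a finite constant independent of x. -/

import Mathlib

/-!
Write `x = a - b` with `a = y + x/2`, `b = y - x/2`. Then `1 + |x|^α` is at most `2^α` times the
sum of the two factors of the denominator, so the integrand is dominated by `2^α` times the sum of
two translates of `y ↦ (1 + |y|^α)⁻¹`. Each translate integrates to `2 ∫_0^∞ dz/(1+z^α)`, which is
finite because `(1 + |y|^α)⁻¹ ≤ 2^α (1 + |y|)^(-α)`.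
-/

open Real MeasureTheory Set

lemma Real.add_rpow_le_two_rpow_mul_rpow_add_rpow {a b p : ℝ} (ha : 0 ≤ a) (hb : 0 ≤ b)
    (hp : 0 ≤ p) : (a + b) ^ p ≤ 2 ^ p * (a ^ p + b ^ p) := calc
  (a + b) ^ p ≤ (2 * max a b) ^ p := by
    gcongr
    rw [two_mul]
    exact add_le_add (le_max_left a b) (le_max_right a b)
  _ = 2 ^ p * max a b ^ p := mul_rpow zero_le_two (ha.trans (le_max_left a b))
  _ ≤ 2 ^ p * (a ^ p + b ^ p) := by
    gcongr
    rcases max_cases a b with ⟨h, -⟩ | ⟨h, -⟩ <;> rw [h]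
    · exact le_add_of_nonneg_right (rpow_nonneg hb p)
    · exact le_add_of_nonneg_left (rpow_nonneg ha p)

lemma one_add_abs_sub_rpow_le {α : ℝ} (hα : 0 ≤ α) (a b : ℝ) :
    1 + |a - b| ^ α ≤ 2 ^ α * ((1 + |a| ^ α) + (1 + |b| ^ α)) := by
  have h2α : 1 ≤ (2 : ℝ) ^ α := one_le_rpow one_le_two hα
  have hsub : |a - b| ^ α ≤ 2 ^ α * (|a| ^ α + |b| ^ α) :=
    (rpow_le_rpow (abs_nonneg _) (abs_sub _ _) hα).trans
      (add_rpow_le_two_rpow_mul_rpow_add_rpow (abs_nonneg a) (abs_nonneg b) hα)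
  nlinarith

lemma div_mul_one_add_abs_rpow_le {α : ℝ} (hα : 0 ≤ α) (a b : ℝ) :
    (1 + |a - b| ^ α) / ((1 + |a| ^ α) * (1 + |b| ^ α)) ≤
      2 ^ α * ((1 + |a| ^ α)⁻¹ + (1 + |b| ^ α)⁻¹) := by
  have hA : 0 < 1 + |a| ^ α := by positivity
  have hB : 0 < 1 + |b| ^ α := by positivity
  calc (1 + |a - b| ^ α) / ((1 + |a| ^ α) * (1 + |b| ^ α))
      ≤ 2 ^ α * ((1 + |a| ^ α) + (1 + |b| ^ α)) / ((1 + |a| ^ α) * (1 + |b| ^ α)) := by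
        gcongr
        exact one_add_abs_sub_rpow_le hα a b
    _ = 2 ^ α * ((1 + |a| ^ α)⁻¹ + (1 + |b| ^ α)⁻¹) := by
        field_simp
        ring

lemma integrable_inv_one_add_abs_rpow {α : ℝ} (hα : 1 < α) :
    Integrable fun y : ℝ => (1 + |y| ^ α)⁻¹ := by
  have hdom : Integrable fun y : ℝ => 2 ^ α * (1 + ‖y‖) ^ (-α) :=
    (integrable_one_add_norm (by simpa using hα)).const_mul _
  refine hdom.mono' (Measurable.aestronglyMeasurable (by fun_prop)) (ae_of_all _ fun y => ?_)
  have hbracket : (1 + |y|) ^ α ≤ 2 ^ α * (1 + |y| ^ α) := by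
    simpa using add_rpow_le_two_rpow_mul_rpow_add_rpow zero_le_one (abs_nonneg y) (by linarith)
  rw [Real.norm_eq_abs, abs_of_pos (by positivity), Real.norm_eq_abs, rpow_neg (by positivity)]
  calc (1 + |y| ^ α)⁻¹ = 2 ^ α / (2 ^ α * (1 + |y| ^ α)) := by field_simp
    _ ≤ 2 ^ α / (1 + |y|) ^ α := by gcongr
    _ = 2 ^ α * ((1 + |y|) ^ α)⁻¹ := div_eq_mul_inv _ _

lemma integrableOn_Ioi_inv_one_add_rpow {α : ℝ} (hα : 1 < α) :
    IntegrableOn (fun z : ℝ => (1 + z ^ α)⁻¹) (Ioi 0) :=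
  (integrable_inv_one_add_abs_rpow hα).integrableOn.congr_fun
    (fun z hz => by simp only [abs_of_pos (mem_Ioi.mp hz)]) measurableSet_Ioi

theorem statement_13_general (α : ℝ) (hα : 1 < α) (x : ℝ) :
    (∫ y : ℝ, (1 + |x| ^ α) / ((1 + |y + x / 2| ^ α) * (1 + |y - x / 2| ^ α))) ≤
      (2 : ℝ) ^ (α + 2) * ∫ z in Set.Ioi (0 : ℝ), (1 + z ^ α)⁻¹ ∧
    IntegrableOn (fun z : ℝ => (1 + z ^ α)⁻¹) (Set.Ioi (0 : ℝ)) := by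
  refine ⟨?_, integrableOn_Ioi_inv_one_add_rpow hα⟩
  have hf := integrable_inv_one_add_abs_rpow hα
  have hplus : Integrable fun y : ℝ => (1 + |y + x / 2| ^ α)⁻¹ := hf.comp_add_right (x / 2)
  have hminus : Integrable fun y : ℝ => (1 + |y - x / 2| ^ α)⁻¹ := hf.comp_sub_right (x / 2)
  calc (∫ y : ℝ, (1 + |x| ^ α) / ((1 + |y + x / 2| ^ α) * (1 + |y - x / 2| ^ α)))
      ≤ ∫ y : ℝ, 2 ^ α * ((1 + |y + x / 2| ^ α)⁻¹ + (1 + |y - x / 2| ^ α)⁻¹) := by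
        refine integral_mono_of_nonneg (ae_of_all _ fun y => by positivity)
          ((hplus.add hminus).const_mul _) (ae_of_all _ fun y => ?_)
        simpa using div_mul_one_add_abs_rpow_le (by linarith) (y + x / 2) (y - x / 2)
    _ = 2 ^ α * (2 * ∫ y : ℝ, (1 + |y| ^ α)⁻¹) := by
        rw [integral_const_mul, integral_add hplus hminus,
          integral_add_right_eq_self (fun y => (1 + |y| ^ α)⁻¹),
          integral_sub_right_eq_self (fun y => (1 + |y| ^ α)⁻¹), two_mul]
    _ = 2 ^ (α + 2) * ∫ z in Ioi (0 : ℝ), (1 + z ^ α)⁻¹ := by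
        rw [integral_comp_abs (f := fun z => (1 + z ^ α)⁻¹), rpow_add two_pos]
        norm_num
        ring

/-- For `α > 1` and `|x| ≥ 1`,
`∫_ℝ (1+|x|^α) / ((1+|y+x/2|^α)(1+|y−x/2|^α)) dy ≤ 2^{α+2} ∫_0^∞ dz/(1+z^α)`,
and the right-hand side is a finite constant independent of `x`
(the integrand `z ↦ (1+z^α)⁻¹` is integrable on `(0,∞)` since `α > 1`). -/
theorem statement_13 (α : ℝ) (hα : 1 < α) (x : ℝ) (hx : 1 ≤ |x|) :
    (∫ y : ℝ, (1 + |x| ^ α) / ((1 + |y + x / 2| ^ α) * (1 + |y - x / 2| ^ α))) ≤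
      (2 : ℝ) ^ (α + 2) * ∫ z in Set.Ioi (0 : ℝ), (1 + z ^ α)⁻¹ ∧
    IntegrableOn (fun z : ℝ => (1 + z ^ α)⁻¹) (Set.Ioi (0 : ℝ)) :=
  statement_13_general α hα x
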